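/- arXiv:1904.01181 — 3 statements merged into one kernel-verified Lean document; each statement's English description precedes it below -/
import Mathlib

section
/- If (a,b) is a Golay complementary pair of length N with equal energies ρ_a(0) = ρ_b(0) = E, then for every z on the complex unit circle, |A(z)|^2 ≤ 2E, where A(z) is the polynomial of a. Consequently the peak-to-average power ratio of the OFDM signal generated by a is at most 2 (i.e., 3 dB). -/
/-! On the unit circle `conj z = z⁻¹`, so `conj (A z) * A z = ∑ i j, conj (a i) * a j * z ^ (j - i)`.
Grouping the terms by the shift `j - i` gives `|A(z)|² + ρ_a(0) = C_a(z) + conj (C_a(z))`, where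
`C_a(z) = ∑ k, ρ_a(k) z ^ k`. For a Golay pair `C_a + C_b` is the constant `ρ_a(0) + ρ_b(0)`, hence
`|A(z)|² + |B(z)|² = ρ_a(0) + ρ_b(0) = 2E`. -/

open Complex Finset

/-- Polynomial A(z) = Σ_{i<N} a_i z^i of a length-N sequence. -/
noncomputable def poly (N : ℕ) (a : ℕ → ℂ) (z : ℂ) : ℂ :=
  ∑ i ∈ Finset.range N, a i * z ^ i

/-- Aperiodic autocorrelation ρ_a(k) for k ≥ 0. -/
noncomputable def acorr (N : ℕ) (a : ℕ → ℂ) (k : ℕ) : ℂ :=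
  ∑ i ∈ Finset.range (N - k), (starRingEnd ℂ) (a i) * a (i + k)

/-- (a,b) is a Golay complementary pair of length N. -/
def IsGCP (N : ℕ) (a b : ℕ → ℂ) : Prop :=
  ∀ k : ℕ, 0 < k → acorr N a k + acorr N b k = 0

open ComplexConjugate

namespace Finset

variable {M : Type*} [AddCommMonoid M]

theorem sum_range_sum_range_add_sum_range_diag (N : ℕ) (F : ℕ → ℕ → M) :
    ∑ i ∈ range N, ∑ j ∈ range N, F i j + ∑ i ∈ range N, F i i =
      ∑ j ∈ range N, ∑ i ∈ range (j + 1), F i j + ∑ j ∈ range N, ∑ i ∈ range (j + 1), F j i := by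
  induction N with
  | zero => simp
  | succ N ih =>
    have := congrArg (· + (∑ j ∈ range N, F N j + ∑ i ∈ range N, F i N + F N N + F N N)) ih
    simp only [sum_range_succ _ N, sum_add_distrib]
    convert this using 1 <;> abel

theorem sum_range_sum_range_succ_eq_sum_range_sum_range_sub (N : ℕ) (F : ℕ → ℕ → M) :
    ∑ j ∈ range N, ∑ i ∈ range (j + 1), F i j = ∑ k ∈ range N, ∑ i ∈ range (N - k), F i (i + k) := by
  rw [← sum_range_diag_flip N fun k i => F i (i + k)]
  refine sum_congr rfl fun j _ => ?_
  rw [← sum_range_reflect]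
  refine sum_congr rfl fun i hi => ?_
  have := mem_range.1 hi
  congr 1; omega

end Finset

noncomputable def acorrPoly (N : ℕ) (a : ℕ → ℂ) (z : ℂ) : ℂ :=
  ∑ k ∈ range N, acorr N a k * z ^ k

theorem acorr_zero (N : ℕ) (a : ℕ → ℂ) : acorr N a 0 = ((∑ i ∈ range N, ‖a i‖ ^ 2 : ℝ) : ℂ) := by
  simp [acorr, Complex.conj_mul']

theorem conj_poly_mul_poly_add_acorr_zero (N : ℕ) (a : ℕ → ℂ) {z : ℂ} (hz : ‖z‖ = 1) :
    conj (poly N a z) * poly N a z + acorr N a 0 = acorrPoly N a z + conj (acorrPoly N a z) := by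
  have hzz : conj z * z = 1 := by rw [Complex.conj_mul', hz]; norm_num
  set F : ℕ → ℕ → ℂ := fun i j => conj (a i * z ^ i) * (a j * z ^ j)
  have hF : ∀ i j, F j i = conj (F i j) := fun i j => by simp only [F, map_mul, conj_conj]; ring
  have hshift : ∀ i k, F i (i + k) = conj (a i) * a (i + k) * z ^ k := fun i k => by
    calc F i (i + k) = conj (a i) * a (i + k) * (conj z * z) ^ i * z ^ k := by
          simp only [F, map_mul, map_pow, mul_pow, pow_add]; ring
      _ = _ := by rw [hzz, one_pow, mul_one]
  have hupper : ∑ j ∈ range N, ∑ i ∈ range (j + 1), F i j = acorrPoly N a z := by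
    simp only [sum_range_sum_range_succ_eq_sum_range_sum_range_sub, hshift, acorrPoly, acorr,
      sum_mul]
  have hdiag : ∑ i ∈ range N, F i i = acorr N a 0 := by
    simpa only [add_zero, pow_zero, mul_one, acorr, Nat.sub_zero] using
      sum_congr rfl fun i _ => hshift i 0
  have hsquare : conj (poly N a z) * poly N a z = ∑ i ∈ range N, ∑ j ∈ range N, F i j := by
    simp only [poly, map_sum, sum_mul_sum, F]
  have hlower : ∑ j ∈ range N, ∑ i ∈ range (j + 1), F j i = conj (acorrPoly N a z) := by
    simp only [← hupper, map_sum]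
    exact sum_congr rfl fun j _ => sum_congr rfl fun i _ => hF i j
  rw [hsquare, ← hdiag, sum_range_sum_range_add_sum_range_diag, hupper, hlower]

theorem acorrPoly_add_acorrPoly_of_isGCP {N : ℕ} {a b : ℕ → ℂ} (h : IsGCP N a b) (z : ℂ) :
    acorrPoly N a z + acorrPoly N b z = acorr N a 0 + acorr N b 0 := by
  simp only [acorrPoly, ← sum_add_distrib, ← add_mul]
  rw [sum_eq_single 0 (fun k _ hk => by rw [h k (Nat.pos_of_ne_zero hk), zero_mul])
    (fun h0 => by simp [show N = 0 by simpa using h0, acorr])]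
  simp

theorem norm_poly_sq_add_norm_poly_sq_of_isGCP {N : ℕ} {a b : ℕ → ℂ} (h : IsGCP N a b) {z : ℂ}
    (hz : ‖z‖ = 1) :
    ‖poly N a z‖ ^ 2 + ‖poly N b z‖ ^ 2 = ∑ i ∈ range N, ‖a i‖ ^ 2 + ∑ i ∈ range N, ‖b i‖ ^ 2 := by
  have hsum := acorrPoly_add_acorrPoly_of_isGCP h z
  have hsum' := congrArg conj hsum
  have ha := conj_poly_mul_poly_add_acorr_zero N a hz
  have hb := conj_poly_mul_poly_add_acorr_zero N b hz
  simp only [acorr_zero, map_add, Complex.conj_ofReal, Complex.conj_mul'] at hsum hsum' ha hb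
  apply Complex.ofReal_injective
  simp only [Complex.ofReal_add, Complex.ofReal_pow]
  linear_combination ha + hb + hsum + hsum'

theorem gcp_papr_le_two (N : ℕ) (a b : ℕ → ℂ) (E : ℝ) (h : IsGCP N a b)
    (ha : acorr N a 0 = (E : ℂ)) (hb : acorr N b 0 = (E : ℂ)) :
    ∀ z : ℂ, ‖z‖ = 1 → ‖poly N a z‖ ^ 2 ≤ 2 * E := by
  intro z hz
  have hEa : ∑ i ∈ range N, ‖a i‖ ^ 2 = E := by exact_mod_cast (acorr_zero N a).symm.trans ha
  have hEb : ∑ i ∈ range N, ‖b i‖ ^ 2 = E := by exact_mod_cast (acorr_zero N b).symm.trans hb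
  have := norm_poly_sq_add_norm_poly_sq_of_isGCP h hz
  linarith [sq_nonneg ‖poly N b z‖]
end

section
/- (Main theorem) Let (a,b) be a Golay complementary pair of length N and (c,d) a Golay complementary pair of length M. Let ω1, ω2 be complex numbers with |ω1| = |ω2| = 1, and let k, l, m be integers. Define f and g by their polynomials F(z) = ω1·A(z^k)·C(z^l) + ω2·B(z^k)·D(z^l)·z^m and G(z) = ω1·A(z^k)·D̃(z^l) − ω2·B(z^k)·C̃(z^l)·z^m, where C̃, D̃ are the polynomials of the conjugate-reversed sequences of c and d. Then (f,g) is a Golay complementary pair, i.e., |F(z)|^2 + |G(z)|^2 = (ρ_a(0)+ρ_b(0))(ρ_c(0)+ρ_d(0)) for all z on the unit circle. -/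
open Complex Finset

lemma tri_reindex (N : ℕ) (h : ℕ → ℕ → ℂ) :
    ∑ k ∈ range N, ∑ i ∈ range (N - k), h i (i + k) =
      ∑ p ∈ (range N ×ˢ range N).filter (fun p => p.1 ≤ p.2), h p.1 p.2 := by
  rw [Finset.sum_sigma']
  apply Finset.sum_nbij' (i := fun x => (x.2, x.2 + x.1)) (j := fun p => ⟨p.2 - p.1, p.1⟩)
  · intro x hx; simp only [Finset.mem_sigma, Finset.mem_range] at hx
    simp only [Finset.mem_filter, Finset.mem_product, Finset.mem_range]; omega
  · intro p hp; simp only [Finset.mem_filter, Finset.mem_product, Finset.mem_range] at hp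
    simp only [Finset.mem_sigma, Finset.mem_range]; omega
  · intro x hx; simp only [Finset.mem_sigma, Finset.mem_range] at hx
    simp
  · intro p hp; simp only [Finset.mem_filter, Finset.mem_product, Finset.mem_range] at hp
    obtain ⟨p1, p2⟩ := p; simp at hp ⊢; omega
  · intro x hx; rfl

lemma diag_sum (N : ℕ) (h : ℕ → ℕ → ℂ) :
    ∑ p ∈ (range N ×ˢ range N).filter (fun p => p.1 = p.2), h p.1 p.2 =
      ∑ i ∈ range N, h i i := by
  apply Finset.sum_nbij' (i := fun p => p.1) (j := fun i => (i, i))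
  · intro p hp; simp only [Finset.mem_filter, Finset.mem_product, Finset.mem_range] at hp
    simp only [Finset.mem_range]; omega
  · intro i hi; simp only [Finset.mem_range] at hi
    simp only [Finset.mem_filter, Finset.mem_product, Finset.mem_range]; simp; omega
  · intro p hp; simp only [Finset.mem_filter, Finset.mem_product, Finset.mem_range] at hp
    obtain ⟨p1, p2⟩ := p; simp_all
  · intro i hi; rfl
  · intro p hp; simp only [Finset.mem_filter, Finset.mem_product, Finset.mem_range] at hp
    rw [hp.2]

lemma swap_sum (N : ℕ) (h : ℕ → ℕ → ℂ) :
    ∑ p ∈ (range N ×ˢ range N).filter (fun p => p.1 ≤ p.2), h p.2 p.1 =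
      ∑ p ∈ (range N ×ˢ range N).filter (fun p => p.2 ≤ p.1), h p.1 p.2 := by
  apply Finset.sum_nbij' (i := Prod.swap) (j := Prod.swap)
  · intro p hp; simp only [Finset.mem_filter, Finset.mem_product, Finset.mem_range,
      Prod.fst_swap, Prod.snd_swap] at hp ⊢; tauto
  · intro p hp; simp only [Finset.mem_filter, Finset.mem_product, Finset.mem_range,
      Prod.fst_swap, Prod.snd_swap] at hp ⊢; tauto
  · intro p _; simp
  · intro p _; simp
  · intro p _; rfl

lemma split_sum (N : ℕ) (h : ℕ × ℕ → ℂ) :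
    ∑ p ∈ (range N ×ˢ range N).filter (fun p => p.1 ≤ p.2), h p +
      ∑ p ∈ (range N ×ˢ range N).filter (fun p => p.2 ≤ p.1), h p =
    ∑ p ∈ range N ×ˢ range N, h p +
      ∑ p ∈ (range N ×ˢ range N).filter (fun p => p.1 = p.2), h p := by
  simp only [Finset.sum_filter, ← Finset.sum_add_distrib]
  apply Finset.sum_congr rfl
  intro p _
  split_ifs <;> first | omega | ring

lemma unit_mul_conj (w : ℂ) (h : ‖w‖ = 1) : w * (starRingEnd ℂ) w = 1 := by
  rw [Complex.mul_conj]; norm_cast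
  simp [Complex.normSq_eq_norm_sq, h]

lemma ofReal_norm_sq (w : ℂ) : ((‖w‖ ^ 2 : ℝ) : ℂ) = w * (starRingEnd ℂ) w := by
  rw [Complex.mul_conj]; norm_cast
  simp [Complex.normSq_eq_norm_sq]

lemma poly_mul_conj (N : ℕ) (a : ℕ → ℂ) (z : ℂ) (hz : ‖z‖ = 1) :
    poly N a z * (starRingEnd ℂ) (poly N a z) =
      (∑ k ∈ range N, (acorr N a k * z ^ k +
        (starRingEnd ℂ) (acorr N a k * z ^ k))) - acorr N a 0 := by
  have hz1 : z * (starRingEnd ℂ) z = 1 := unit_mul_conj z hz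
  set g : ℕ → ℕ → ℂ := fun i j => (a j * z ^ j) * (starRingEnd ℂ) (a i * z ^ i) with hg
  have key : ∀ i j : ℕ, (starRingEnd ℂ) (g i j) = g j i := by
    intro i j; simp only [hg, map_mul, RingHom.id_apply, Complex.conj_conj]; ring
  have hL : poly N a z * (starRingEnd ℂ) (poly N a z) =
      ∑ p ∈ range N ×ˢ range N, g p.1 p.2 := by
    rw [poly, map_sum, Finset.sum_mul_sum, Finset.sum_comm, ← Finset.sum_product']
  have hA : ∑ k ∈ range N, acorr N a k * z ^ k =
      ∑ p ∈ (range N ×ˢ range N).filter (fun p => p.1 ≤ p.2), g p.1 p.2 := by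
    rw [← tri_reindex N g]
    apply Finset.sum_congr rfl; intro k _
    rw [acorr, Finset.sum_mul]
    apply Finset.sum_congr rfl; intro i _
    simp only [hg, map_mul, map_pow]
    have e : z ^ (i + k) * ((starRingEnd ℂ) z) ^ i = z ^ k := by
      rw [pow_add, mul_comm (z ^ i), mul_assoc, ← mul_pow, hz1, one_pow, mul_one]
    linear_combination (-((starRingEnd ℂ) (a i) * a (i + k))) * e
  have hA' : ∑ k ∈ range N, (starRingEnd ℂ) (acorr N a k * z ^ k) =
      ∑ p ∈ (range N ×ˢ range N).filter (fun p => p.2 ≤ p.1), g p.1 p.2 := by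
    rw [← map_sum, hA, map_sum, ← swap_sum N g]
    apply Finset.sum_congr rfl; intro p _; rw [key]
  have hD : acorr N a 0 = ∑ p ∈ (range N ×ˢ range N).filter (fun p => p.1 = p.2), g p.1 p.2 := by
    rw [diag_sum N g, acorr]
    simp only [Nat.sub_zero, Nat.add_zero]
    apply Finset.sum_congr rfl; intro i _
    simp only [hg, map_mul, map_pow]
    have e2 : z ^ i * ((starRingEnd ℂ) z) ^ i = 1 := by rw [← mul_pow, hz1, one_pow]
    linear_combination (-(a i * (starRingEnd ℂ) (a i))) * e2
  rw [hL, Finset.sum_add_distrib, hA, hA', hD, split_sum N (fun p => g p.1 p.2)]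
  ring

lemma gcp_const (N : ℕ) (a b : ℕ → ℂ) (hab : IsGCP N a b) (z : ℂ) (hz : ‖z‖ = 1) :
    poly N a z * (starRingEnd ℂ) (poly N a z) + poly N b z * (starRingEnd ℂ) (poly N b z) =
      acorr N a 0 + acorr N b 0 := by
  have conj0 : ∀ u : ℕ → ℂ, (starRingEnd ℂ) (acorr N u 0) = acorr N u 0 := by
    intro u
    rw [acorr, map_sum]
    apply Finset.sum_congr rfl; intro i _
    simp only [map_mul, Complex.conj_conj, Nat.add_zero]; ring
  rw [poly_mul_conj N a z hz, poly_mul_conj N b z hz]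
  have key : ∑ k ∈ range N, ((acorr N a k * z ^ k + (starRingEnd ℂ) (acorr N a k * z ^ k)) +
      (acorr N b k * z ^ k + (starRingEnd ℂ) (acorr N b k * z ^ k))) =
      acorr N a 0 + acorr N b 0 + ((starRingEnd ℂ) (acorr N a 0) + (starRingEnd ℂ) (acorr N b 0)) := by
    rw [Finset.sum_eq_single 0]
    · simp only [pow_zero, mul_one]; ring
    · intro k _ hk
      have h0 := hab k (Nat.pos_of_ne_zero hk)
      have h1 : acorr N a k = - acorr N b k := by linear_combination h0
      rw [h1]
      simp only [map_mul, map_neg]; ring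
    · intro h0
      simp only [Finset.mem_range, not_lt, Nat.le_zero] at h0
      subst h0
      simp [acorr]
  have expand : (∑ k ∈ range N, (acorr N a k * z ^ k + (starRingEnd ℂ) (acorr N a k * z ^ k))) - acorr N a 0 +
      ((∑ k ∈ range N, (acorr N b k * z ^ k + (starRingEnd ℂ) (acorr N b k * z ^ k))) - acorr N b 0)
      = (∑ k ∈ range N, ((acorr N a k * z ^ k + (starRingEnd ℂ) (acorr N a k * z ^ k)) +
          (acorr N b k * z ^ k + (starRingEnd ℂ) (acorr N b k * z ^ k)))) -
          (acorr N a 0 + acorr N b 0) := by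
    simp only [Finset.sum_add_distrib]; ring
  rw [expand, key, conj0, conj0]; ring

lemma tilde_eq (M : ℕ) (c : ℕ → ℂ) (w : ℂ) (hw : ‖w‖ = 1) :
    (starRingEnd ℂ) (poly M (fun i => (starRingEnd ℂ) (c (M - 1 - i))) w) * w ^ (M - 1) =
      poly M c w := by
  have hw1 : w * (starRingEnd ℂ) w = 1 := unit_mul_conj w hw
  rw [poly, map_sum, Finset.sum_mul]
  conv_rhs => rw [poly, ← Finset.sum_range_reflect]
  apply Finset.sum_congr rfl
  intro i hi
  simp only [Finset.mem_range] at hi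
  simp only [map_mul, Complex.conj_conj, map_pow]
  have e : w ^ (M - 1) = w ^ (M - 1 - i) * w ^ i := by
    rw [← pow_add]; congr 1; omega
  have e2 : ((starRingEnd ℂ) w) ^ i * w ^ i = 1 := by
    rw [← mul_pow, mul_comm, hw1, one_pow]
  rw [e]
  linear_combination (c (M - 1 - i) * w ^ (M - 1 - i)) * e2

lemma tilde_norm (M : ℕ) (c : ℕ → ℂ) (w : ℂ) (hw : ‖w‖ = 1) :
    poly M (fun i => (starRingEnd ℂ) (c (M - 1 - i))) w *
      (starRingEnd ℂ) (poly M (fun i => (starRingEnd ℂ) (c (M - 1 - i))) w) =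
      poly M c w * (starRingEnd ℂ) (poly M c w) := by
  have hw1 : w * (starRingEnd ℂ) w = 1 := unit_mul_conj w hw
  have h1 := tilde_eq M c w hw
  have h2 := congrArg (starRingEnd ℂ) h1
  simp only [map_mul, Complex.conj_conj, map_pow] at h2
  have hpw : w ^ (M - 1) * ((starRingEnd ℂ) w) ^ (M - 1) = 1 := by
    rw [← mul_pow, hw1, one_pow]
  linear_combination (starRingEnd ℂ) (poly M c w) * h1 +
    ((starRingEnd ℂ) (poly M (fun i => (starRingEnd ℂ) (c (M - 1 - i))) w) * w ^ (M - 1)) * h2 -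
    (poly M (fun i => (starRingEnd ℂ) (c (M - 1 - i))) w *
      (starRingEnd ℂ) (poly M (fun i => (starRingEnd ℂ) (c (M - 1 - i))) w)) * hpw

lemma tilde_cross (M : ℕ) (c d : ℕ → ℂ) (w : ℂ) (hw : ‖w‖ = 1) :
    poly M (fun i => (starRingEnd ℂ) (d (M - 1 - i))) w *
      (starRingEnd ℂ) (poly M (fun i => (starRingEnd ℂ) (c (M - 1 - i))) w) =
      poly M c w * (starRingEnd ℂ) (poly M d w) := by
  have hw1 : w * (starRingEnd ℂ) w = 1 := unit_mul_conj w hw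
  have h1 := tilde_eq M c w hw
  have h2 := congrArg (starRingEnd ℂ) (tilde_eq M d w hw)
  simp only [map_mul, Complex.conj_conj, map_pow] at h2
  have hpw : w ^ (M - 1) * ((starRingEnd ℂ) w) ^ (M - 1) = 1 := by
    rw [← mul_pow, hw1, one_pow]
  linear_combination (starRingEnd ℂ) (poly M d w) * h1 +
    ((starRingEnd ℂ) (poly M (fun i => (starRingEnd ℂ) (c (M - 1 - i))) w) * w ^ (M - 1)) * h2 -
    (poly M (fun i => (starRingEnd ℂ) (d (M - 1 - i))) w *
      (starRingEnd ℂ) (poly M (fun i => (starRingEnd ℂ) (c (M - 1 - i))) w)) * hpw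

lemma alg_identity (u v A B C D Ct Dt : ℂ)
    (hu : u * (starRingEnd ℂ) u = 1) (hv : v * (starRingEnd ℂ) v = 1)
    (hC : Ct * (starRingEnd ℂ) Ct = C * (starRingEnd ℂ) C)
    (hD : Dt * (starRingEnd ℂ) Dt = D * (starRingEnd ℂ) D)
    (hcross : Dt * (starRingEnd ℂ) Ct = C * (starRingEnd ℂ) D) :
    (u * A * C + v * B * D) * (starRingEnd ℂ) (u * A * C + v * B * D) +
      (u * A * Dt - v * B * Ct) * (starRingEnd ℂ) (u * A * Dt - v * B * Ct) =
      (A * (starRingEnd ℂ) A + B * (starRingEnd ℂ) B) *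
        (C * (starRingEnd ℂ) C + D * (starRingEnd ℂ) D) := by
  have hcross2 := congrArg (starRingEnd ℂ) hcross
  simp only [map_mul, Complex.conj_conj] at hcross2
  simp only [map_add, map_sub, map_mul]
  linear_combination
    (A * (starRingEnd ℂ) A * (C * (starRingEnd ℂ) C + Dt * (starRingEnd ℂ) Dt)) * hu +
    (B * (starRingEnd ℂ) B * (D * (starRingEnd ℂ) D + Ct * (starRingEnd ℂ) Ct)) * hv +
    (A * (starRingEnd ℂ) A) * hD + (B * (starRingEnd ℂ) B) * hC -
    (u * (starRingEnd ℂ) v * A * (starRingEnd ℂ) B) * hcross -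
    (v * (starRingEnd ℂ) u * B * (starRingEnd ℂ) A) * hcross2

theorem main_gcp_construction (N M : ℕ) (a b c d : ℕ → ℂ)
    (hab : IsGCP N a b) (hcd : IsGCP M c d)
    (ω1 ω2 : ℂ) (hω1 : ‖ω1‖ = 1) (hω2 : ‖ω2‖ = 1) (k l m : ℤ) :
    ∀ z : ℂ, ‖z‖ = 1 →
      ((‖ω1 * poly N a (z ^ k) * poly M c (z ^ l) +
            ω2 * poly N b (z ^ k) * poly M d (z ^ l) * z ^ m‖ ^ 2 +
          ‖ω1 * poly N a (z ^ k) *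
              poly M (fun i => (starRingEnd ℂ) (d (M - 1 - i))) (z ^ l) -
            ω2 * poly N b (z ^ k) *
              poly M (fun i => (starRingEnd ℂ) (c (M - 1 - i))) (z ^ l) * z ^ m‖ ^ 2 : ℝ) : ℂ) =
        (acorr N a 0 + acorr N b 0) * (acorr M c 0 + acorr M d 0) := by
  intro z hz
  have hwk : ‖z ^ k‖ = 1 := by rw [norm_zpow, hz, one_zpow]
  have hwl : ‖z ^ l‖ = 1 := by rw [norm_zpow, hz, one_zpow]
  have hwm : ‖z ^ m‖ = 1 := by rw [norm_zpow, hz, one_zpow]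
  have hu : ω1 * (starRingEnd ℂ) ω1 = 1 := unit_mul_conj ω1 hω1
  have hv : (ω2 * z ^ m) * (starRingEnd ℂ) (ω2 * z ^ m) = 1 := by
    apply unit_mul_conj
    rw [norm_mul, hω2, hwm, one_mul]
  have hC := tilde_norm M c (z ^ l) hwl
  have hD := tilde_norm M d (z ^ l) hwl
  have hcross := tilde_cross M c d (z ^ l) hwl
  have halg := alg_identity ω1 (ω2 * z ^ m) (poly N a (z ^ k)) (poly N b (z ^ k))
    (poly M c (z ^ l)) (poly M d (z ^ l))
    (poly M (fun i => (starRingEnd ℂ) (c (M - 1 - i))) (z ^ l))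
    (poly M (fun i => (starRingEnd ℂ) (d (M - 1 - i))) (z ^ l))
    hu hv hC hD hcross
  have hAB := gcp_const N a b hab (z ^ k) hwk
  have hCD := gcp_const M c d hcd (z ^ l) hwl
  rw [Complex.ofReal_add, ofReal_norm_sq, ofReal_norm_sq]
  simp only [map_add, map_sub, map_mul] at halg ⊢
  linear_combination halg +
    (poly M c (z ^ l) * (starRingEnd ℂ) (poly M c (z ^ l)) +
      poly M d (z ^ l) * (starRingEnd ℂ) (poly M d (z ^ l))) * hAB +
    (acorr N a 0 + acorr N b 0) * hCD
end

section
/- In the main construction F(z) = ω1·A(z^k)C(z^l) + ω2·B(z^k)D(z^l)·z^m with |ω1|=|ω2|=1, the bound |F(z)|^2 + |G(z)|^2 = (ρ_a(0)+ρ_b(0))(ρ_c(0)+ρ_d(0)) on the unit circle holds uniformly in (ω1, ω2); hence the sequence f obtained for any choice of unit-modulus data symbols ω1, ω2 ∈ {e^{iπ/4}, e^{3iπ/4}, e^{−iπ/4}, e^{−3iπ/4}} is a complementary sequence with the same energy bound, so information can be modulated onto (ω1, ω2) without changing the 3 dB PAPR guarantee. -/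
open Complex Finset

/-! On the unit circle `conj u = u⁻¹`, so `conj (A u) * A u` expands as
`ρ_a(0) + Σ_{k ≥ 1} (ρ_a(k) u^k + conj (ρ_a(k) u^k))`; for a Golay pair the off-peak
autocorrelations cancel and `|A u|² + |B u|² = ρ_a(0) + ρ_b(0)`. The conjugate reversal of `D`
evaluates to `u^(M-1) * conj (D u)`, so with `p = ω1 A`, `q = ω2 B z^m` the pair `(F, G)` is, up to
a unimodular factor on `G`, `(p C + q D, p conj D - q conj C)`, and the quaternion-norm identity
`|p C + q D|² + |p conj D - q conj C|² = (|p|² + |q|²)(|C|² + |D|²)` finishes the proof; the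
unimodular `ω1`, `ω2`, `z^m` disappear inside `|p|` and `|q|`. -/

open ComplexConjugate

lemma sum_range_sum_range_add_sum_diag {M : Type*} [AddCommMonoid M] (g : ℕ → ℕ → M) (N : ℕ) :
    ∑ i ∈ range N, ∑ j ∈ range N, g i j + ∑ i ∈ range N, g i i =
      ∑ j ∈ range N, ∑ i ∈ range (j + 1), (g i j + g j i) := by
  induction N with
  | zero => simp
  | succ N ih =>
    rw [sum_range_succ (fun j => ∑ i ∈ range (j + 1), (g i j + g j i)), ← ih]
    simp only [sum_range_succ, sum_add_distrib]
    abel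

lemma conj_pow_mul_pow_of_le {u : ℂ} (hu : ‖u‖ = 1) {i j : ℕ} (hij : i ≤ j) :
    conj (u ^ i) * u ^ j = u ^ (j - i) := by
  rw [← Nat.sub_add_cancel hij, pow_add, ← mul_assoc, mul_comm _ (u ^ (j - i)), mul_assoc,
    Complex.conj_mul', norm_pow, hu, Nat.add_sub_cancel]
  simp

lemma sq_norm_add_sq_norm_alamouti (p q C D : ℂ) :
    ‖p * C + q * D‖ ^ 2 + ‖p * conj D - q * conj C‖ ^ 2 =
      (‖p‖ ^ 2 + ‖q‖ ^ 2) * (‖C‖ ^ 2 + ‖D‖ ^ 2) := by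
  simp only [Complex.sq_norm, normSq_apply, add_re, add_im, sub_re, sub_im, mul_re, mul_im,
    conj_re, conj_im]
  ring

lemma sum_range_sum_range_succ_conj_mul_eq_sum_acorr (N : ℕ) (a : ℕ → ℂ) {u : ℂ}
    (hu : ‖u‖ = 1) :
    ∑ j ∈ range N, ∑ i ∈ range (j + 1), conj (a i * u ^ i) * (a j * u ^ j) =
      ∑ k ∈ range N, acorr N a k * u ^ k := by
  simp only [acorr, sum_mul]
  rw [← sum_range_diag_flip N (fun k i => conj (a i) * a (i + k) * u ^ k)]
  refine sum_congr rfl fun j _ => ?_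
  rw [← sum_range_reflect]
  refine sum_congr rfl fun i hi => ?_
  have hij : i ≤ j := Nat.lt_succ_iff.mp (mem_range.mp hi)
  rw [Nat.add_sub_cancel, Nat.sub_add_cancel hij, map_mul,
    mul_mul_mul_comm, conj_pow_mul_pow_of_le hu (Nat.sub_le j i), Nat.sub_sub_self hij]

-- The peak `ρ_a(0)` is the `k = 0` term of both the sum and its conjugate, hence the
-- extra `acorr N a 0` on the left.
lemma conj_poly_mul_poly_add_acorr_zero_s13 (N : ℕ) (a : ℕ → ℂ) {u : ℂ} (hu : ‖u‖ = 1) :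
    conj (poly N a u) * poly N a u + acorr N a 0 =
      ∑ k ∈ range N, acorr N a k * u ^ k + conj (∑ k ∈ range N, acorr N a k * u ^ k) := by
  have hdiag : ∑ i ∈ range N, conj (a i * u ^ i) * (a i * u ^ i) = acorr N a 0 := by
    refine sum_congr rfl fun i _ => ?_
    rw [map_mul, mul_mul_mul_comm, conj_pow_mul_pow_of_le hu le_rfl, Nat.sub_self, pow_zero,
      mul_one, Nat.add_zero]
  rw [← sum_range_sum_range_succ_conj_mul_eq_sum_acorr N a hu, poly, map_sum, sum_mul_sum,
    ← hdiag, sum_range_sum_range_add_sum_diag, map_sum, ← sum_add_distrib]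
  refine sum_congr rfl fun j _ => ?_
  rw [map_sum, ← sum_add_distrib]
  refine sum_congr rfl fun i _ => ?_
  rw [map_mul (starRingEnd ℂ) (conj (a i * u ^ i)), Complex.conj_conj, mul_comm (a i * u ^ i)]

lemma conj_acorr_zero (N : ℕ) (a : ℕ → ℂ) : conj (acorr N a 0) = acorr N a 0 := by
  simp only [acorr, Nat.add_zero, map_sum, map_mul, Complex.conj_conj, mul_comm]

lemma IsGCP.sq_norm_poly_add_sq_norm_poly {N : ℕ} {a b : ℕ → ℂ} (hab : IsGCP N a b) {u : ℂ}
    (hu : ‖u‖ = 1) :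
    ((‖poly N a u‖ ^ 2 + ‖poly N b u‖ ^ 2 : ℝ) : ℂ) = acorr N a 0 + acorr N b 0 := by
  have hsum : ∑ k ∈ range N, acorr N a k * u ^ k + ∑ k ∈ range N, acorr N b k * u ^ k =
      acorr N a 0 + acorr N b 0 := by
    rw [← sum_add_distrib, sum_eq_single 0]
    · simp
    · intro k _ hk
      rw [← add_mul, hab k (Nat.pos_of_ne_zero hk), zero_mul]
    · intro h0
      obtain rfl : N = 0 := by simpa using h0
      simp [acorr]
  have hsum' := congrArg conj hsum
  simp only [map_add] at hsum'
  push_cast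
  rw [← Complex.conj_mul', ← Complex.conj_mul']
  linear_combination conj_poly_mul_poly_add_acorr_zero_s13 N a hu +
    conj_poly_mul_poly_add_acorr_zero_s13 N b hu + hsum + hsum' + conj_acorr_zero N a +
    conj_acorr_zero N b

lemma poly_conj_reverse (M : ℕ) (d : ℕ → ℂ) {w : ℂ} (hw : ‖w‖ = 1) :
    poly M (fun i => conj (d (M - 1 - i))) w = w ^ (M - 1) * conj (poly M d w) := by
  rw [poly, poly, map_sum, mul_sum, ← sum_range_reflect]
  refine sum_congr rfl fun i hi => ?_
  have hi : i ≤ M - 1 := Nat.le_sub_one_of_lt (mem_range.mp hi)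
  rw [Nat.sub_sub_self hi, map_mul, mul_left_comm, mul_comm (w ^ (M - 1)),
    conj_pow_mul_pow_of_le hw hi]

theorem sq_norm_add_sq_norm_eq_of_isGCP {N M : ℕ} {a b c d : ℕ → ℂ}
    (hab : IsGCP N a b) (hcd : IsGCP M c d) (k l m : ℤ) {ω1 ω2 z : ℂ}
    (hω1 : ‖ω1‖ = 1) (hω2 : ‖ω2‖ = 1) (hz : ‖z‖ = 1) :
    ((‖ω1 * poly N a (z ^ k) * poly M c (z ^ l) +
          ω2 * poly N b (z ^ k) * poly M d (z ^ l) * z ^ m‖ ^ 2 +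
        ‖ω1 * poly N a (z ^ k) * poly M (fun i => conj (d (M - 1 - i))) (z ^ l) -
          ω2 * poly N b (z ^ k) * poly M (fun i => conj (c (M - 1 - i))) (z ^ l) * z ^ m‖ ^ 2
        : ℝ) : ℂ) =
      (acorr N a 0 + acorr N b 0) * (acorr M c 0 + acorr M d 0) := by
  have hunit (n : ℤ) : ‖z ^ n‖ = 1 := by rw [norm_zpow, hz, one_zpow]
  have hw := hunit l
  have hs : ‖(z ^ l) ^ (M - 1)‖ = 1 := by rw [norm_pow, hw, one_pow]
  rw [poly_conj_reverse M d hw, poly_conj_reverse M c hw]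
  set A := poly N a (z ^ k)
  set B := poly N b (z ^ k)
  set C := poly M c (z ^ l)
  set D := poly M d (z ^ l)
  have hF : ω1 * A * C + ω2 * B * D * z ^ m = (ω1 * A) * C + (ω2 * B * z ^ m) * D := by ring
  have hG :
      ω1 * A * ((z ^ l) ^ (M - 1) * conj D) - ω2 * B * ((z ^ l) ^ (M - 1) * conj C) * z ^ m =
      (z ^ l) ^ (M - 1) * ((ω1 * A) * conj D - (ω2 * B * z ^ m) * conj C) := by ring
  rw [hF, hG, norm_mul, hs, one_mul, sq_norm_add_sq_norm_alamouti, norm_mul, norm_mul, norm_mul,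
    hω1, hω2, hunit m, ← hab.sq_norm_poly_add_sq_norm_poly (hunit k),
    ← hcd.sq_norm_poly_add_sq_norm_poly hw]
  push_cast
  ring

lemma norm_eq_one_of_mem_qpsk {w : ℂ}
    (hw : w ∈ ({Complex.exp (Real.pi * Complex.I / 4), Complex.exp (3 * Real.pi * Complex.I / 4),
        Complex.exp (-(Real.pi * Complex.I) / 4),
        Complex.exp (-(3 * Real.pi * Complex.I) / 4)} : Set ℂ)) : ‖w‖ = 1 := by
  rcases hw with rfl | rfl | rfl | rfl <;> simp [Complex.norm_exp]

theorem qpsk_modulated_cs (N M : ℕ) (a b c d : ℕ → ℂ)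
    (hab : IsGCP N a b) (hcd : IsGCP M c d) (k l m : ℤ) :
    ∀ ω1 ω2 : ℂ,
      ω1 ∈ ({Complex.exp (Real.pi * Complex.I / 4), Complex.exp (3 * Real.pi * Complex.I / 4),
              Complex.exp (-(Real.pi * Complex.I) / 4),
              Complex.exp (-(3 * Real.pi * Complex.I) / 4)} : Set ℂ) →
      ω2 ∈ ({Complex.exp (Real.pi * Complex.I / 4), Complex.exp (3 * Real.pi * Complex.I / 4),
              Complex.exp (-(Real.pi * Complex.I) / 4),
              Complex.exp (-(3 * Real.pi * Complex.I) / 4)} : Set ℂ) →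
      ∀ z : ℂ, ‖z‖ = 1 →
        ((‖ω1 * poly N a (z ^ k) * poly M c (z ^ l) +
              ω2 * poly N b (z ^ k) * poly M d (z ^ l) * z ^ m‖ ^ 2 +
            ‖ω1 * poly N a (z ^ k) *
                poly M (fun i => (starRingEnd ℂ) (d (M - 1 - i))) (z ^ l) -
              ω2 * poly N b (z ^ k) *
                poly M (fun i => (starRingEnd ℂ) (c (M - 1 - i))) (z ^ l) * z ^ m‖ ^ 2 : ℝ) : ℂ) =
          (acorr N a 0 + acorr N b 0) * (acorr M c 0 + acorr M d 0) :=
  fun _ _ hω1 hω2 _ hz => sq_norm_add_sq_norm_eq_of_isGCP hab hcd k l m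
    (norm_eq_one_of_mem_qpsk hω1) (norm_eq_one_of_mem_qpsk hω2) hz
end
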